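/- arXiv:2309.02956 — 4 statements merged into one kernel-verified Lean document; each statement's English description precedes it below -/
import Mathlib

section
/- Let m, δ > 0 with δm > 2, set u*² = 3δm − 1 − √(8(δm)² − 8δm) and k² = (1/δ)(√(2(δm)² − 2δm) − δm). Then u*² = δ(m − k²)²/(2m). -/
/-- At the Turing point of the Klausmeier–Gray–Scott model,
u*² = δ(m − k²)²/(2m). -/
theorem stmt_12 (m δ : ℝ) (hm : 0 < m) (hδ : 0 < δ) (h2 : 2 < δ * m) :
    3 * (δ * m) - 1 - Real.sqrt (8 * (δ * m) ^ 2 - 8 * (δ * m)) =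
      δ * (m - (1 / δ) * (Real.sqrt (2 * (δ * m) ^ 2 - 2 * (δ * m)) - δ * m)) ^ 2 /
        (2 * m) := by
  have hs : (2:ℝ) < δ * m := h2
  have hpos : 0 ≤ 2 * (δ * m) ^ 2 - 2 * (δ * m) := by nlinarith
  have h8 : 8 * (δ * m) ^ 2 - 8 * (δ * m) = 2 ^ 2 * (2 * (δ * m) ^ 2 - 2 * (δ * m)) := by
    ring
  rw [h8, Real.sqrt_mul (by norm_num), Real.sqrt_sq (by norm_num : (0:ℝ) ≤ 2)]
  have hr : Real.sqrt (2 * (δ * m) ^ 2 - 2 * (δ * m)) ^ 2 = 2 * (δ * m) ^ 2 - 2 * (δ * m) :=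
    Real.sq_sqrt hpos
  set r := Real.sqrt (2 * (δ * m) ^ 2 - 2 * (δ * m)) with hrdef
  field_simp
  nlinarith [hr, hm, hδ, mul_pos hδ hm]
end

section
/- Let m, δ > 0 with δm > 2, set u*² = 3δm − 1 − √(8(δm)² − 8δm) and k² = (1/δ)(√(2(δm)² − 2δm) − δm). Then m − k² = ½[m + (1/δ)(1 + u*²)] > 0 and m − 2k² = (1/δ)(1 + u*²) > 0. -/
/-!
Write `s = δm` and `r = √(2s² − 2s)`. Since `√(8s² − 8s) = 2r`, we have `1 + u*² = 3s − 2r`,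
while `m − k² = (2s − r)/δ` and `m − 2k² = (3s − 2r)/δ`; the two identities are then ring
identities in `r`. Positivity reduces to `2r < 3s`, i.e. `8s² − 8s < 9s²`, which holds as
`s > 0`.
-/

open Real

lemma sqrt_eight_mul_sq_sub (x : ℝ) : √(8 * x ^ 2 - 8 * x) = 2 * √(2 * x ^ 2 - 2 * x) := by
  rw [show 8 * x ^ 2 - 8 * x = 2 ^ 2 * (2 * x ^ 2 - 2 * x) by ring,
    sqrt_mul (by positivity), sqrt_sq zero_le_two]

lemma two_mul_sqrt_two_mul_sq_sub_lt {s : ℝ} (hs : 0 < s) :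
    2 * √(2 * s ^ 2 - 2 * s) < 3 * s := by
  have h : √(2 * s ^ 2 - 2 * s) < 3 * s / 2 := by
    rw [sqrt_lt' (by positivity)]
    nlinarith
  linarith

theorem stmt_13_general (m δ : ℝ) (hm : 0 < m) (hδ : 0 < δ) :
    m - (1 / δ) * (Real.sqrt (2 * (δ * m) ^ 2 - 2 * (δ * m)) - δ * m) =
      (1 / 2) * (m + (1 / δ) *
        (1 + (3 * (δ * m) - 1 - Real.sqrt (8 * (δ * m) ^ 2 - 8 * (δ * m))))) ∧
    0 < m - (1 / δ) * (Real.sqrt (2 * (δ * m) ^ 2 - 2 * (δ * m)) - δ * m) ∧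
    m - 2 * ((1 / δ) * (Real.sqrt (2 * (δ * m) ^ 2 - 2 * (δ * m)) - δ * m)) =
      (1 / δ) *
        (1 + (3 * (δ * m) - 1 - Real.sqrt (8 * (δ * m) ^ 2 - 8 * (δ * m)))) ∧
    0 < m - 2 * ((1 / δ) * (Real.sqrt (2 * (δ * m) ^ 2 - 2 * (δ * m)) - δ * m)) := by
  have hs : 0 < δ * m := mul_pos hδ hm
  have hr := two_mul_sqrt_two_mul_sq_sub_lt hs
  rw [sqrt_eight_mul_sq_sub]
  set r := √(2 * (δ * m) ^ 2 - 2 * (δ * m))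
  have hk : m - (1 / δ) * (r - δ * m) = (2 * (δ * m) - r) / δ := by field_simp; ring
  have hk2 : m - 2 * ((1 / δ) * (r - δ * m)) = (3 * (δ * m) - 2 * r) / δ := by
    field_simp; ring
  refine ⟨?_, ?_, ?_, ?_⟩
  · rw [hk]; field_simp; ring
  · rw [hk]; exact div_pos (by linarith) hδ
  · rw [hk2]; field_simp; ring
  · rw [hk2]; exact div_pos (by linarith) hδ

/-- At the Turing point of the Klausmeier–Gray–Scott model,
m − k² = ½[m + (1/δ)(1 + u*²)] > 0 and m − 2k² = (1/δ)(1 + u*²) > 0. -/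
theorem stmt_13 (m δ : ℝ) (hm : 0 < m) (hδ : 0 < δ) (h2 : 2 < δ * m) :
    m - (1 / δ) * (Real.sqrt (2 * (δ * m) ^ 2 - 2 * (δ * m)) - δ * m) =
      (1 / 2) * (m + (1 / δ) *
        (1 + (3 * (δ * m) - 1 - Real.sqrt (8 * (δ * m) ^ 2 - 8 * (δ * m))))) ∧
    0 < m - (1 / δ) * (Real.sqrt (2 * (δ * m) ^ 2 - 2 * (δ * m)) - δ * m) ∧
    m - 2 * ((1 / δ) * (Real.sqrt (2 * (δ * m) ^ 2 - 2 * (δ * m)) - δ * m)) =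
      (1 / δ) *
        (1 + (3 * (δ * m) - 1 - Real.sqrt (8 * (δ * m) ^ 2 - 8 * (δ * m)))) ∧
    0 < m - 2 * ((1 / δ) * (Real.sqrt (2 * (δ * m) ^ 2 - 2 * (δ * m)) - δ * m)) :=
  stmt_13_general m δ hm hδ
end

section
/- Let m, δ > 0 with δm > 2, set u*² = 3δm − 1 − √(8(δm)² − 8δm) and k² = (1/δ)(√(2(δm)² − 2δm) − δm), and define P₁ := u*(m − k²)²(m + k²)/(4k²m²(u*² − 1)) and P₂ := −(m − k²)/u*². Then P₁ > 0 and P₂ < 0. -/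
/-- At the Turing point of the Klausmeier–Gray–Scott model (δm > 2), the
qualitative predictors P₁ = u*(m−k²)²(m+k²)/(4k²m²(u*²−1)) and
P₂ = −(m−k²)/u*² satisfy P₁ > 0 and P₂ < 0. -/
theorem stmt_17 (m δ : ℝ) (hm : 0 < m) (hδ : 0 < δ) (h2 : 2 < δ * m) :
    (0 <
      Real.sqrt (3 * (δ * m) - 1 - Real.sqrt (8 * (δ * m) ^ 2 - 8 * (δ * m))) *
        (m - (1 / δ) * (Real.sqrt (2 * (δ * m) ^ 2 - 2 * (δ * m)) - δ * m)) ^ 2 *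
        (m + (1 / δ) * (Real.sqrt (2 * (δ * m) ^ 2 - 2 * (δ * m)) - δ * m)) /
        (4 * ((1 / δ) * (Real.sqrt (2 * (δ * m) ^ 2 - 2 * (δ * m)) - δ * m)) *
          m ^ 2 *
          ((Real.sqrt (3 * (δ * m) - 1 -
              Real.sqrt (8 * (δ * m) ^ 2 - 8 * (δ * m)))) ^ 2 - 1))) ∧
    (-((m - (1 / δ) * (Real.sqrt (2 * (δ * m) ^ 2 - 2 * (δ * m)) - δ * m)) /
        (Real.sqrt (3 * (δ * m) - 1 -
          Real.sqrt (8 * (δ * m) ^ 2 - 8 * (δ * m)))) ^ 2) < 0) := by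
  set s := δ * m with hsdef
  have hs0 : 0 < s := mul_pos hδ hm
  have hA : Real.sqrt (2 * s ^ 2 - 2 * s) < 2 * s :=
    (Real.sqrt_lt' (by positivity)).2 (by nlinarith)
  have hB : s < Real.sqrt (2 * s ^ 2 - 2 * s) :=
    (Real.lt_sqrt hs0.le).2 (by nlinarith)
  have hC : Real.sqrt (8 * s ^ 2 - 8 * s) < 3 * s - 2 :=
    (Real.sqrt_lt' (by nlinarith)).2 (by nlinarith)
  set K : ℝ := (1 / δ) * (Real.sqrt (2 * s ^ 2 - 2 * s) - s) with hKdef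
  set U : ℝ := Real.sqrt (3 * s - 1 - Real.sqrt (8 * s ^ 2 - 8 * s)) with hUdef
  have hUsq : U ^ 2 = 3 * s - 1 - Real.sqrt (8 * s ^ 2 - 8 * s) :=
    Real.sq_sqrt (by linarith)
  have hUpos : 0 < U := Real.sqrt_pos.2 (by linarith)
  have hU1 : 1 < U ^ 2 := by rw [hUsq]; linarith
  have hK0 : 0 < K := by
    apply mul_pos (by positivity); linarith
  have hKm : K < m := by
    rw [hKdef, one_div, inv_mul_lt_iff₀ hδ]
    have : δ * m = s := rfl
    rw [this]; linarith
  constructor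
  · apply div_pos
    · have h1 : 0 < m - K := by linarith
      have h2 : 0 < m + K := by linarith
      positivity
    · have : 0 < U ^ 2 - 1 := by linarith
      positivity
  · have h1 : 0 < m - K := by linarith
    have : 0 < (m - K) / U ^ 2 := div_pos h1 (by positivity)
    linarith
end

section
/- Let m, δ > 0 with δm > 2, set u*² = 3δm − 1 − √(8(δm)² − 8δm) and k² = (1/δ)(√(2(δm)² − 2δm) − δm), and define P₃ := −2u*mk²/((m − 2k²)(m − k²)(m + k²)) (taking u* > 0). Then P₃ < 0. -/
/-- At the Turing point of the Klausmeier–Gray–Scott model (δm > 2), the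
qualitative predictor P₃ = −2u*mk²/((m − 2k²)(m − k²)(m + k²)), with
u* > 0 the steady-state density, is negative. -/
theorem stmt_18 (m δ : ℝ) (hm : 0 < m) (hδ : 0 < δ) (h2 : 2 < δ * m) :
    -(2 * Real.sqrt (3 * (δ * m) - 1 - Real.sqrt (8 * (δ * m) ^ 2 - 8 * (δ * m)))
        * m * ((1 / δ) * (Real.sqrt (2 * (δ * m) ^ 2 - 2 * (δ * m)) - δ * m))) /
      ((m - 2 * ((1 / δ) * (Real.sqrt (2 * (δ * m) ^ 2 - 2 * (δ * m)) - δ * m))) *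
        (m - (1 / δ) * (Real.sqrt (2 * (δ * m) ^ 2 - 2 * (δ * m)) - δ * m)) *
        (m + (1 / δ) * (Real.sqrt (2 * (δ * m) ^ 2 - 2 * (δ * m)) - δ * m))) < 0 := by
  set s := δ * m with hs
  have hs0 : (0:ℝ) < s := by linarith
  -- r = sqrt(2s² - 2s)
  set r := Real.sqrt (2 * s ^ 2 - 2 * s) with hr
  have hr_lt : s < r := by
    rw [hr]
    have := Real.lt_sqrt (le_of_lt hs0) (y := 2 * s ^ 2 - 2 * s)
    rw [this]
    nlinarith
  have hr_ub : r < (3 / 2) * s := by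
    rw [hr]
    have h32 : (0:ℝ) < (3 / 2) * s := by linarith
    rw [Real.sqrt_lt' h32]
    nlinarith
  -- sqrt(8s² - 8s) < 3s - 1, so u* > 0
  have hA : Real.sqrt (8 * s ^ 2 - 8 * s) < 3 * s - 1 := by
    have h31 : (0:ℝ) < 3 * s - 1 := by linarith
    rw [Real.sqrt_lt' h31]
    nlinarith
  have hu : 0 < Real.sqrt (3 * s - 1 - Real.sqrt (8 * s ^ 2 - 8 * s)) := by
    apply Real.sqrt_pos.mpr
    linarith
  -- k² = (1/δ)(r - s)
  have hk2 : 0 < (1 / δ) * (r - s) := by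
    apply mul_pos (by positivity)
    linarith
  have hk2m : (1 / δ) * (r - s) < m := by
    rw [div_mul_eq_mul_div, one_mul, div_lt_iff₀ hδ]
    nlinarith
  have hk2m2 : 2 * ((1 / δ) * (r - s)) < m := by
    rw [div_mul_eq_mul_div, one_mul, ← mul_div_assoc, div_lt_iff₀ hδ]
    nlinarith
  apply div_neg_of_neg_of_pos
  · have : 0 < 2 * Real.sqrt (3 * s - 1 - Real.sqrt (8 * s ^ 2 - 8 * s)) * m
        * ((1 / δ) * (r - s)) := by positivity
    linarith
  · have h1 : 0 < m - 2 * ((1 / δ) * (r - s)) := by linarith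
    have h2' : 0 < m - (1 / δ) * (r - s) := by linarith
    have h3 : 0 < m + (1 / δ) * (r - s) := by linarith
    positivity
end
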